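/- Let A be the 4×4 real matrix with rows (0, 0, 0, 1), (1, (63+4√26)/85, 0, 0), (0, (22−4√26)/85, (63−4√26)/85, 0), (0, 0, (22+4√26)/85, 0), let b = (0, 0, 0, 1)ᵀ and c = (6, 0, 0, 51)ᵀ. Then all entries of A, b, c are nonnegative, and for every k ≥ 1, cᵀ A^{k−1} b = 1 − 25·(2/5)^{k−1} + 75·(1/5)^{k−1}. In other words, (A, b, c) is a 4-dimensional positive realization of the impulse response of H^4(z) = 1/(z−1) − 4(5/2)^{2}/(z−0.4) + 3·5^{2}/(z−0.2). -/

import Mathlib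

open Matrix

noncomputable def Amat (s : ℝ) : Matrix (Fin 4) (Fin 4) ℝ :=
  !![0, 0, 0, 1;
     1, (63 + 4 * s) / 85, 0, 0;
     0, (22 - 4 * s) / 85, (63 - 4 * s) / 85, 0;
     0, 0, (22 + 4 * s) / 85, 0]

noncomputable def Bmat2 (s : ℝ) : Matrix (Fin 4) (Fin 4) ℝ :=
  !![(0), (0), (22/85 + (4/85) * s), (0);
  (63/85 + (4/85) * s), (877/1445 + (504/7225) * s), (0), (1);
  (22/85 + (-4/85) * s), (2772/7225 + (-504/7225) * s), (877/1445 + (-504/7225) * s), (0);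
  (0), (4/425), (194/1445 + (164/7225) * s), (0)]

noncomputable def Bmat3 (s : ℝ) : Matrix (Fin 4) (Fin 4) ℝ :=
  !![(0), (4/425), (194/1445 + (164/7225) * s), (0);
  (877/1445 + (504/7225) * s), (328671/614125 + (49292/614125) * s), (22/85 + (4/85) * s), (63/85 + (4/85) * s);
  (2772/7225 + (-504/7225) * s), (271106/614125 + (-49292/614125) * s), (328671/614125 + (-49292/614125) * s), (22/85 + (-4/85) * s);
  (4/425), (504/36125), (44054/614125 + (6452/614125) * s), (0)]

lemma Amat_sq (s : ℝ) (hs : s ^ 2 = 26) : Amat s ^ 2 = Bmat2 s := by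
  rw [sq]
  ext i j
  fin_cases i <;> fin_cases j <;>
    simp [Amat, Bmat2, Matrix.mul_apply, Fin.sum_univ_four, Matrix.vecHead, Matrix.vecTail] <;>
    ring_nf <;> rw [hs] <;> ring

lemma Amat_cube (s : ℝ) (hs : s ^ 2 = 26) : Amat s ^ 3 = Bmat3 s := by
  rw [pow_succ, Amat_sq s hs]
  ext i j
  fin_cases i <;> fin_cases j <;>
    simp [Amat, Bmat2, Bmat3, Matrix.mul_apply, Fin.sum_univ_four, Matrix.vecHead, Matrix.vecTail] <;>
    ring_nf <;> rw [hs] <;> ring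

lemma key (s : ℝ) (hs : s ^ 2 = 26) (n : ℕ) :
    (![6, 0, 0, 51] : Fin 4 → ℝ) ⬝ᵥ (Amat s ^ n).mulVec ![0, 0, 0, 1]
      = 1 - 25 * (2 / 5 : ℝ) ^ n + 75 * (1 / 5 : ℝ) ^ n := by
  induction n using Nat.strong_induction_on with
  | _ n ih =>
    match n, ih with
    | 0, _ => rw [pow_zero, Matrix.one_mulVec]; norm_num [dotProduct, Fin.sum_univ_succ]
    | 1, _ =>
      norm_num [pow_one, Amat, Matrix.mulVec, dotProduct, Fin.sum_univ_succ,
        Matrix.vecHead, Matrix.vecTail]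
    | 2, _ =>
      rw [Amat_sq s hs]
      norm_num [Bmat2, Matrix.mulVec, dotProduct, Fin.sum_univ_succ,
        Matrix.vecHead, Matrix.vecTail]
    | 3, _ =>
      rw [Amat_cube s hs]
      norm_num [Bmat3, Matrix.mulVec, dotProduct, Fin.sum_univ_succ,
        Matrix.vecHead, Matrix.vecTail]
    | (m + 4), ih =>
      have hb4 : (Amat s ^ 4) *ᵥ ![0,0,0,1]
          = (126/85 : ℝ) • (Amat s ^ 3 *ᵥ ![0,0,0,1])
            - (209/425 : ℝ) • (Amat s ^ 2 *ᵥ ![0,0,0,1])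
            + (4/425 : ℝ) • ![0,0,0,1] := by
        rw [show Amat s ^ 4 = Amat s ^ 3 * Amat s from pow_succ _ 3,
          Amat_cube s hs, Amat_sq s hs, ← Matrix.mulVec_mulVec]
        funext i
        fin_cases i <;>
          simp [Amat, Bmat2, Bmat3, Matrix.mulVec, dotProduct, Fin.sum_univ_four,
            Matrix.vecHead, Matrix.vecTail] <;>
          ring_nf <;> rw [hs] <;> ring
      have hp : Amat s ^ (m + 4) = Amat s ^ m * Amat s ^ 4 := by rw [← pow_add]
      rw [hp, ← Matrix.mulVec_mulVec, hb4]
      simp only [Matrix.mulVec_add, Matrix.mulVec_sub, Matrix.mulVec_smul,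
        Matrix.mulVec_mulVec, ← pow_add, dotProduct_add, dotProduct_sub,
        dotProduct_smul, smul_eq_mul]
      rw [ih m (by omega), ih (m + 2) (by omega), ih (m + 3) (by omega)]
      ring

/-- The explicit 4-dimensional positive realization of
`H^4(z) = 1/(z−1) − 25/(z−2/5) + 75/(z−1/5)` from Example 3 of Nagy–Matolcsi:
all entries of `(A, b, c)` are nonnegative and `cᵀA^{k−1}b = 1 − 25(2/5)^{k−1} + 75(1/5)^{k−1}`
for every `k ≥ 1`. -/
theorem explicit_realization_H4
    (A : Matrix (Fin 4) (Fin 4) ℝ)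
    (hA : A = !![0, 0, 0, 1;
                 1, (63 + 4 * Real.sqrt 26) / 85, 0, 0;
                 0, (22 - 4 * Real.sqrt 26) / 85, (63 - 4 * Real.sqrt 26) / 85, 0;
                 0, 0, (22 + 4 * Real.sqrt 26) / 85, 0])
    (b c : Fin 4 → ℝ) (hb : b = ![0, 0, 0, 1]) (hc : c = ![6, 0, 0, 51]) :
    (∀ i j, 0 ≤ A i j) ∧ (∀ i, 0 ≤ b i) ∧ (∀ i, 0 ≤ c i) ∧
      ∀ k : ℕ, 1 ≤ k →
        c ⬝ᵥ (A ^ (k - 1)).mulVec b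
          = 1 - 25 * (2 / 5 : ℝ) ^ (k - 1) + 75 * (1 / 5 : ℝ) ^ (k - 1) := by
  have hs : Real.sqrt 26 ^ 2 = 26 := Real.sq_sqrt (by norm_num)
  have hnn : (0:ℝ) ≤ Real.sqrt 26 := Real.sqrt_nonneg 26
  have hub : Real.sqrt 26 ≤ 5.5 := by nlinarith [hs, hnn]
  have hA' : A = Amat (Real.sqrt 26) := by rw [hA]; rfl
  subst hA' hb hc
  refine ⟨?_, ?_, ?_, ?_⟩
  · intro i j
    fin_cases i <;> fin_cases j <;>
      simp [Amat, Matrix.vecHead, Matrix.vecTail] <;> nlinarith [hs, hnn, hub]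
  · intro i; fin_cases i <;> norm_num
  · intro i; fin_cases i <;> norm_num
  · intro k _
    exact key (Real.sqrt 26) hs (k - 1)
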